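/- For all reals a > 0 and b > 0: (1/B(a,b)) ∫₀¹ ( −x log x − (1−x) log(1−x) ) x^{a−1} (1−x)^{b−1} dx = ψ₀(a+b+1) − (a/(a+b)) ψ₀(a+1) − (b/(a+b)) ψ₀(b+1). That is, the expected binary entropy of a Beta(a,b) random variable equals ψ₀(a+b+1) − (a/(a+b)) ψ₀(a+1) − (b/(a+b)) ψ₀(b+1). -/

import Mathlib

open MeasureTheory Real

/-- The digamma function `ψ₀(x) = d/dx log Γ(x)`. -/
noncomputable def digamma (x : ℝ) : ℝ := deriv (fun y => Real.log (Real.Gamma y)) x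

/-- The Beta function `B(a,b) = Γ(a)Γ(b)/Γ(a+b)`. -/
noncomputable def betaFn (a b : ℝ) : ℝ := Real.Gamma a * Real.Gamma b / Real.Gamma (a + b)

/-!
Differentiating the Beta integral `∫₀¹ x^(u-1) (1-x)^(b-1) dx = B(u,b)` in `u` under the integral
sign gives `∫₀¹ log x · x^(a-1) (1-x)^(b-1) dx = B(a,b) (ψ₀(a) - ψ₀(a+b))`. As `x · x^(a-1) = x^a`
and `B(a+1,b) = a/(a+b) · B(a,b)`, this evaluates the `-x log x` half of the entropy; the
substitution `x ↦ 1 - x` swaps `a` and `b` and turns the other half into the first.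
-/

open Set intervalIntegral
open scoped Interval Topology

lemma ofReal_rpow_mul_one_sub_rpow {x : ℝ} (hx : x ∈ Icc 0 1) (u v : ℝ) :
    ((x ^ (u - 1) * (1 - x) ^ (v - 1) : ℝ) : ℂ)
      = (x : ℂ) ^ (u - 1 : ℂ) * (1 - x : ℂ) ^ (v - 1 : ℂ) := by
  push_cast [Complex.ofReal_cpow hx.1, Complex.ofReal_cpow (sub_nonneg.2 hx.2)]
  rfl

lemma betaIntegral_ofReal (u v : ℝ) :
    Complex.betaIntegral u v
      = ((∫ x in (0 : ℝ)..1, x ^ (u - 1) * (1 - x) ^ (v - 1) : ℝ) : ℂ) := by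
  rw [Complex.betaIntegral, ← intervalIntegral.integral_ofReal]
  refine integral_congr fun x hx => (ofReal_rpow_mul_one_sub_rpow ?_ u v).symm
  rwa [uIcc_of_le zero_le_one] at hx

lemma intervalIntegrable_rpow_mul_one_sub_rpow {u v : ℝ} (hu : 0 < u) (hv : 0 < v) :
    IntervalIntegrable (fun x : ℝ => x ^ (u - 1) * (1 - x) ^ (v - 1)) volume 0 1 := by
  refine (Complex.betaIntegral_convergent (u := u) (v := v) (by simpa) (by simpa)).norm.congr
    fun x hx => ?_
  rw [uIoc_of_le zero_le_one] at hx
  have hx : x ∈ Icc 0 1 := Ioc_subset_Icc_self hx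
  simp only [← ofReal_rpow_mul_one_sub_rpow hx, Complex.norm_real, Real.norm_eq_abs]
  exact abs_of_nonneg (mul_nonneg (rpow_nonneg hx.1 _) (rpow_nonneg (sub_nonneg.2 hx.2) _))

lemma integral_rpow_mul_one_sub_rpow {u v : ℝ} (hu : 0 < u) (hv : 0 < v) :
    ∫ x in (0 : ℝ)..1, x ^ (u - 1) * (1 - x) ^ (v - 1) = betaFn u v := by
  rw [← Complex.ofReal_inj, ← betaIntegral_ofReal, Complex.betaIntegral_eq_Gamma_mul_div _ _
    (by simpa) (by simpa), betaFn]
  push_cast [← Complex.Gamma_ofReal]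
  rfl

lemma abs_log_mul_rpow_le {x : ℝ} (hx : x ∈ Ioc 0 1) (u : ℝ) {t : ℝ} (ht : 0 < t) :
    |log x * x ^ u| ≤ t⁻¹ * x ^ (u - t) := by
  have hsplit : x ^ u = x ^ t * x ^ (u - t) := by rw [← rpow_add hx.1]; ring_nf
  rw [hsplit, ← mul_assoc, abs_mul, abs_of_pos (rpow_pos_of_pos hx.1 _), ← one_div]
  exact mul_le_mul_of_nonneg_right (abs_log_mul_self_rpow_lt x t hx.1 hx.2 ht).le
    (rpow_pos_of_pos hx.1 _).le

lemma hasDerivAt_integral_rpow_mul_one_sub_rpow {a b : ℝ} (ha : 0 < a) (hb : 0 < b) :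
    HasDerivAt (fun u => ∫ x in (0 : ℝ)..1, x ^ (u - 1) * (1 - x) ^ (b - 1))
      (∫ x in (0 : ℝ)..1, log x * (x ^ (a - 1) * (1 - x) ^ (b - 1))) a := by
  -- on `|u - a| < a / 4`, trading `x ^ (a / 4)` for the logarithm leaves the kernel at `a / 2`
  have hbound : ∀ x ∈ Ι (0 : ℝ) 1, ∀ u ∈ Metric.ball a (a / 4),
      ‖log x * (x ^ (u - 1) * (1 - x) ^ (b - 1))‖
        ≤ (a / 4)⁻¹ * (x ^ (a / 2 - 1) * (1 - x) ^ (b - 1)) := by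
    intro x hx u hu
    rw [uIoc_of_le zero_le_one] at hx
    rw [Metric.mem_ball, Real.dist_eq, abs_lt] at hu
    have h1x : 0 ≤ (1 - x) ^ (b - 1) := rpow_nonneg (sub_nonneg.2 hx.2) _
    calc ‖log x * (x ^ (u - 1) * (1 - x) ^ (b - 1))‖
        = |log x * x ^ (u - 1)| * (1 - x) ^ (b - 1) := by
          rw [Real.norm_eq_abs, ← mul_assoc, abs_mul, abs_of_nonneg h1x]
      _ ≤ (a / 4)⁻¹ * x ^ (u - 1 - a / 4) * (1 - x) ^ (b - 1) := by
          gcongr; exact abs_log_mul_rpow_le hx _ (by positivity)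
      _ ≤ (a / 4)⁻¹ * x ^ (a / 2 - 1) * (1 - x) ^ (b - 1) := by
          gcongr _ * ?_ * _
          exact rpow_le_rpow_of_exponent_ge hx.1 hx.2 (by linarith)
      _ = _ := mul_assoc _ _ _
  refine (hasDerivAt_integral_of_dominated_loc_of_deriv_le
    (Metric.ball_mem_nhds a (by positivity))
    (Filter.Eventually.of_forall fun u => (by fun_prop : Measurable _).aestronglyMeasurable)
    (intervalIntegrable_rpow_mul_one_sub_rpow ha hb)
    (by fun_prop : Measurable _).aestronglyMeasurable
    (ae_of_all _ hbound)
    ((intervalIntegrable_rpow_mul_one_sub_rpow (by positivity) hb).const_mul _)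
    (ae_of_all _ fun x hx u _ => ?_)).2
  rw [uIoc_of_le zero_le_one] at hx
  exact ((hasStrictDerivAt_const_rpow hx.1 (u - 1)).hasDerivAt.comp_sub_const u 1).mul_const
    ((1 - x) ^ (b - 1)) |>.congr_deriv (by ring)

lemma ne_neg_natCast_of_pos {x : ℝ} (hx : 0 < x) (m : ℕ) : x ≠ -m :=
  ((neg_nonpos.2 m.cast_nonneg).trans_lt hx).ne'

lemma hasDerivAt_Gamma_mul_digamma {x : ℝ} (hx : ∀ m : ℕ, x ≠ -m) :
    HasDerivAt Gamma (Gamma x * digamma x) x := by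
  have hΓ := (differentiableAt_Gamma hx).hasDerivAt
  have hψ : digamma x = deriv Gamma x / Gamma x := (hΓ.log (Gamma_ne_zero hx)).deriv
  rwa [hψ, mul_div_cancel₀ _ (Gamma_ne_zero hx)]

lemma hasDerivAt_betaFn_left {a b : ℝ} (ha : 0 < a) (hb : 0 < b) :
    HasDerivAt (fun u => betaFn u b) (betaFn a b * (digamma a - digamma (a + b))) a := by
  have hab : 0 < a + b := add_pos ha hb
  have hΓab : Gamma (a + b) ≠ 0 := (Gamma_pos_of_pos hab).ne'
  refine ((hasDerivAt_Gamma_mul_digamma (ne_neg_natCast_of_pos ha)).mul_const (Gamma b)).div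
    ((hasDerivAt_Gamma_mul_digamma (ne_neg_natCast_of_pos hab)).comp_add_const a b) hΓab
    |>.congr_deriv ?_
  unfold betaFn
  field_simp

lemma integral_log_mul_rpow_mul_one_sub_rpow {a b : ℝ} (ha : 0 < a) (hb : 0 < b) :
    ∫ x in (0 : ℝ)..1, log x * (x ^ (a - 1) * (1 - x) ^ (b - 1))
      = betaFn a b * (digamma a - digamma (a + b)) := by
  have hB : (fun u => ∫ x in (0 : ℝ)..1, x ^ (u - 1) * (1 - x) ^ (b - 1))
      =ᶠ[𝓝 a] fun u => betaFn u b := by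
    filter_upwards [eventually_gt_nhds ha] with u hu
    exact integral_rpow_mul_one_sub_rpow hu hb
  exact (hasDerivAt_integral_rpow_mul_one_sub_rpow ha hb).unique
    ((hasDerivAt_betaFn_left ha hb).congr_of_eventuallyEq hB)

lemma betaFn_comm (a b : ℝ) : betaFn a b = betaFn b a := by
  rw [betaFn, betaFn, mul_comm, add_comm]

lemma betaFn_add_one_left {a b : ℝ} (ha : 0 < a) (hb : 0 < b) :
    betaFn (a + 1) b = a / (a + b) * betaFn a b := by
  have hab : 0 < a + b := add_pos ha hb
  have hΓab : Gamma (a + b) ≠ 0 := (Gamma_pos_of_pos hab).ne'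
  rw [betaFn, betaFn, Gamma_add_one ha.ne', add_right_comm, Gamma_add_one hab.ne']
  field_simp

lemma integral_mul_log_mul_rpow_mul_one_sub_rpow {a b : ℝ} (ha : 0 < a) (hb : 0 < b) :
    ∫ x in (0 : ℝ)..1, x * log x * (x ^ (a - 1) * (1 - x) ^ (b - 1))
      = a / (a + b) * betaFn a b * (digamma (a + 1) - digamma (a + b + 1)) := by
  have hpt : ∀ x : ℝ, x * log x * (x ^ (a - 1) * (1 - x) ^ (b - 1))
      = log x * (x ^ (a + 1 - 1) * (1 - x) ^ (b - 1)) := fun x => by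
    rcases eq_or_ne x 0 with rfl | hx
    · simp -- both sides vanish since `log 0 = 0`
    · rw [add_sub_cancel_right, rpow_sub_one hx]
      field_simp
  simp_rw [hpt]
  rw [integral_log_mul_rpow_mul_one_sub_rpow (by positivity) hb, betaFn_add_one_left ha hb,
    add_right_comm]

lemma integral_one_sub_mul_log_one_sub_mul_rpow_mul_one_sub_rpow {a b : ℝ} (ha : 0 < a)
    (hb : 0 < b) :
    ∫ x in (0 : ℝ)..1, (1 - x) * log (1 - x) * (x ^ (a - 1) * (1 - x) ^ (b - 1))
      = b / (a + b) * betaFn a b * (digamma (b + 1) - digamma (a + b + 1)) := by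
  have hreflect := integral_comp_sub_left
    (fun y : ℝ => y * log y * (y ^ (b - 1) * (1 - y) ^ (a - 1))) (a := 0) (b := 1) 1
  simp only [sub_sub_cancel, sub_zero, sub_self] at hreflect
  rw [add_comm a b, betaFn_comm a b, ← integral_mul_log_mul_rpow_mul_one_sub_rpow hb ha,
    ← hreflect]
  exact integral_congr fun x _ => by ring

/-- The expected binary entropy of a `Beta(a,b)` random variable equals
`ψ₀(a+b+1) − (a/(a+b)) ψ₀(a+1) − (b/(a+b)) ψ₀(b+1)`. -/
theorem beta_expected_binary_entropy (a b : ℝ) (ha : 0 < a) (hb : 0 < b) :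
    (1 / betaFn a b) *
        ∫ x in Set.Ioo (0 : ℝ) 1,
          (-(x * Real.log x) - (1 - x) * Real.log (1 - x)) * (x ^ (a - 1) * (1 - x) ^ (b - 1))
      = digamma (a + b + 1) - (a / (a + b)) * digamma (a + 1)
          - (b / (a + b)) * digamma (b + 1) := by
  have hK := intervalIntegrable_rpow_mul_one_sub_rpow ha hb
  have hint₁ : IntervalIntegrable
      (fun x => x * log x * (x ^ (a - 1) * (1 - x) ^ (b - 1))) volume 0 1 :=
    hK.continuousOn_mul continuous_mul_log.continuousOn
  have hint₂ : IntervalIntegrable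
      (fun x => (1 - x) * log (1 - x) * (x ^ (a - 1) * (1 - x) ^ (b - 1))) volume 0 1 :=
    hK.continuousOn_mul (continuous_mul_log.comp (continuous_sub_left 1)).continuousOn
  have hsplit : ∀ x : ℝ,
      (-(x * log x) - (1 - x) * log (1 - x)) * (x ^ (a - 1) * (1 - x) ^ (b - 1))
        = -(x * log x * (x ^ (a - 1) * (1 - x) ^ (b - 1))
          + (1 - x) * log (1 - x) * (x ^ (a - 1) * (1 - x) ^ (b - 1))) := fun x => by ring
  rw [← integral_Ioc_eq_integral_Ioo, ← integral_of_le zero_le_one]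
  simp_rw [hsplit]
  rw [intervalIntegral.integral_neg, intervalIntegral.integral_add hint₁ hint₂,
    integral_mul_log_mul_rpow_mul_one_sub_rpow ha hb,
    integral_one_sub_mul_log_one_sub_mul_rpow_mul_one_sub_rpow ha hb]
  have hB : betaFn a b ≠ 0 := (ProbabilityTheory.beta_pos ha hb).ne'
  have hab : a + b ≠ 0 := (add_pos ha hb).ne'
  field_simp
  ring
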